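/- arXiv:1404.6783 — 4 statements merged into one kernel-verified Lean document; each statement's English description precedes it below -/
import Mathlib

section
/- Let Λ be a free ℤ-module of rank 22 equipped with a symmetric bilinear form ⟨·,·⟩ : Λ × Λ → ℤ whose real extension to Λ ⊗ ℝ has signature (3,19,0) (that is, n₊ = 3, n₋ = 19 and the form is nondegenerate). Let h ∈ Λ with ⟨h,h⟩ > 0 and let B ∈ Λ ⊗ ℚ. Then for every positive integer N₀ there exists B' ∈ Λ ⊗ ℚ with B' − B lying in the image of Λ in Λ ⊗ ℚ, such that ⟨B',B'⟩ < 0 (for the ℚ-bilinear extension of the form), and such that every nonzero g ∈ Λ satisfying ⟨g,h⟩ = 0 and g ⊗ 1 ∈ span_ℚ{h ⊗ 1, B'} ⊆ Λ ⊗ ℚ has ⟨g,g⟩ < −N₀. -/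
open TensorProduct

/-- `nPos B` is the maximal dimension of a linear subspace on which the bilinear form `B`
is positive definite. -/
noncomputable def nPos {V : Type*} [AddCommGroup V] [Module ℝ V]
    (B : LinearMap.BilinForm ℝ V) : ℕ :=
  sSup {n : ℕ | ∃ W : Submodule ℝ V, Module.finrank ℝ W = n ∧ ∀ v ∈ W, v ≠ 0 → 0 < B v v}

/-- `nNeg B` is the maximal dimension of a linear subspace on which the bilinear form `B`
is negative definite. -/
noncomputable def nNeg {V : Type*} [AddCommGroup V] [Module ℝ V]
    (B : LinearMap.BilinForm ℝ V) : ℕ :=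
  sSup {n : ℕ | ∃ W : Submodule ℝ V, Module.finrank ℝ W = n ∧ ∀ v ∈ W, v ≠ 0 → B v v < 0}

/-- `nZero B` is the dimension of the radical `{v | ∀ w, B v w = 0}` of `B`. -/
noncomputable def nZero {V : Type*} [AddCommGroup V] [Module ℝ V]
    (B : LinearMap.BilinForm ℝ V) : ℕ :=
  Module.finrank ℝ (LinearMap.ker B)

/-!
A negative direction of the real form can be moved to a rational one (density) and then to an
integral one (clearing denominators); removing its `h`-component gives an integral class `e ⊥ h`
with `e² < 0`. Since `rank Λ > 2`, there is also an integral class `e₁ ⊥ h` such that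
`w = B - (⟨B,h⟩/⟨h,h⟩) h + e₁` does not lie on the line `ℚ e`. Then `B' = B + e₁ + k e` differs
from `B` by a lattice vector, `B' = v + (⟨B,h⟩/⟨h,h⟩) h` with `v = w + k e ⊥ h`, and
`v² → -∞` as `k → ∞`, so `B'² = v² + ⟨B,h⟩²/⟨h,h⟩ < 0` for large `k`.
A nonzero lattice class `g ⊥ h` in `span {h, B'}` is a multiple `β v`. A rational functional `φ`
that kills `e` but not `w` takes values in a discrete subgroup of `ℚ` on the lattice, and
`φ g = β φ w ≠ 0` bounds `|β|` from below independently of `k`; hence `g² = β² v² < -N₀`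
once `v²` is negative enough.
-/

open Filter
open LinearMap (BilinForm)

theorem exists_apply_self_neg_of_nNeg_ne_zero {V : Type*} [AddCommGroup V] [Module ℝ V]
    {C : BilinForm ℝ V} (hC : nNeg C ≠ 0) : ∃ v, C v v < 0 := by
  by_contra! hnonneg
  refine hC (Nat.eq_zero_of_le_zero (csSup_le' fun n ⟨W, hW, hneg⟩ => ?_))
  have hW0 : W = ⊥ := (Submodule.eq_bot_iff W).mpr fun v hv =>
    by_contra fun hv0 => (hnonneg v).not_gt (hneg v hv hv0)
  rw [← hW, hW0, finrank_bot]

section RatTensor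

variable {Λ : Type*} [AddCommGroup Λ]

theorem one_tmul_rat_eq_zero_iff [Module.IsTorsionFree ℤ Λ] {g : Λ} :
    (1 : ℚ) ⊗ₜ[ℤ] g = 0 ↔ g = 0 := by
  refine ⟨fun hg => ?_, fun hg => by rw [hg, tmul_zero]⟩
  obtain ⟨⟨n, hn⟩, hng⟩ :=
    (IsLocalizedModule.eq_zero_iff (nonZeroDivisors ℤ) (TensorProduct.mk ℤ ℚ Λ 1)).mp hg
  exact (smul_eq_zero.mp hng).resolve_left (nonZeroDivisors.ne_zero hn)

theorem exists_zsmul_eq_one_tmul_rat (x : ℚ ⊗[ℤ] Λ) :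
    ∃ n : ℤ, n ≠ 0 ∧ ∃ e : Λ, n • x = (1 : ℚ) ⊗ₜ[ℤ] e := by
  obtain ⟨⟨e, n, hn⟩, he⟩ :=
    IsLocalizedModule.surj (nonZeroDivisors ℤ) (TensorProduct.mk ℤ ℚ Λ 1) x
  exact ⟨n, nonZeroDivisors.ne_zero hn, e, he⟩

theorem exists_pos_le_abs_apply_one_tmul [Module.Finite ℤ Λ] (φ : ℚ ⊗[ℤ] Λ →ₗ[ℚ] ℚ) :
    ∃ ε : ℚ, 0 < ε ∧ ∀ g : Λ, φ (1 ⊗ₜ g) ≠ 0 → ε ≤ |φ (1 ⊗ₜ g)| := by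
  let ψ : Λ →ₗ[ℤ] ℚ := (φ.restrictScalars ℤ).comp (TensorProduct.mk ℤ ℚ Λ 1)
  obtain ⟨d, hd, hint⟩ := FractionalIdeal.isFractional_of_fg (S := nonZeroDivisors ℤ)
    ((Module.Finite.fg_top (R := ℤ) (M := Λ)).map ψ)
  have hd0 : (d : ℚ) ≠ 0 := by exact_mod_cast nonZeroDivisors.ne_zero hd
  refine ⟨|(d : ℚ)|⁻¹, by positivity, fun g hg => ?_⟩
  obtain ⟨z, hz⟩ := hint (ψ g) ⟨g, trivial, rfl⟩
  have hz' : (z : ℚ) = d * φ (1 ⊗ₜ g) := by rwa [eq_intCast, zsmul_eq_mul] at hz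
  have hz0 : z ≠ 0 := by rintro rfl; simp_all
  rw [inv_le_iff_one_le_mul₀ (by positivity), ← abs_mul, mul_comm, ← hz']
  exact_mod_cast Int.one_le_abs hz0

end RatTensor

namespace LinearMap.BilinForm

theorem tendsto_apply_add_smul_self_atBot {𝕜 V : Type*} [Field 𝕜] [LinearOrder 𝕜]
    [IsStrictOrderedRing 𝕜] [Archimedean 𝕜] [AddCommGroup V] [Module 𝕜 V]
    (Q : BilinForm 𝕜 V) (w : V) {e : V} (he : Q e e < 0) :
    Tendsto (fun k : ℕ => Q (w + (k : 𝕜) • e) (w + (k : 𝕜) • e)) atTop atBot := by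
  have hexpand : (fun k : ℕ => Q (w + (k : 𝕜) • e) (w + (k : 𝕜) • e)) =
      fun k : ℕ => (k : 𝕜) * ((k : 𝕜) * Q e e + (Q w e + Q e w)) + Q w w := by
    ext k
    simp only [map_add, map_smul, LinearMap.add_apply, LinearMap.smul_apply, smul_eq_mul]
    ring
  rw [hexpand]
  refine tendsto_atBot_add_const_right _ _ (tendsto_natCast_atTop_atTop.atTop_mul_atBot₀ ?_)
  exact tendsto_atBot_add_const_right _ _ (tendsto_natCast_atTop_atTop.atTop_mul_const_of_neg he)

theorem exists_eq_smul_of_mem_span_pair {K V : Type*} [Field K] [AddCommGroup V] [Module K V]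
    (Q : BilinForm K V) {u v x : V} (c : K) (hu : Q u u ≠ 0) (hv : Q v u = 0)
    (hx : x ∈ Submodule.span K {u, v + c • u}) (hxu : Q x u = 0) : ∃ β : K, x = β • v := by
  obtain ⟨a, b, rfl⟩ := Submodule.mem_span_pair.mp hx
  have hab : a + b * c = 0 := by
    simp only [map_add, map_smul, LinearMap.add_apply, LinearMap.smul_apply, smul_eq_mul,
      hv] at hxu
    exact (mul_eq_zero.mp (by linear_combination hxu)).resolve_right hu
  refine ⟨b, ?_⟩
  rw [smul_add, smul_smul, add_left_comm, ← add_smul, hab, zero_smul, add_zero]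

theorem apply_add_smul_self_of_orthogonal {K V : Type*} [CommRing K] [AddCommGroup V] [Module K V]
    (Q : BilinForm K V) (hQ : LinearMap.IsSymm Q) {u v : V} (hvu : Q v u = 0) (c : K) :
    Q (v + c • u) (v + c • u) = Q v v + c ^ 2 * Q u u := by
  have huv : Q u v = 0 := hQ.eq u v ▸ hvu
  simp only [map_add, map_smul, LinearMap.add_apply, LinearMap.smul_apply, smul_eq_mul, hvu, huv]
  ring

variable {Λ : Type*} [AddCommGroup Λ]

theorem baseChange_one_tmul {A : Type*} [CommRing A] (B : BilinForm ℤ Λ) (x y : Λ) :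
    B.baseChange A (1 ⊗ₜ x) (1 ⊗ₜ y) = B x y := by
  simp

theorem baseChange_apply_self_eq_sum {ι A : Type*} [Fintype ι] [DecidableEq ι] [CommRing A]
    (B : BilinForm ℤ Λ) (b : Module.Basis ι ℤ Λ) (x : A ⊗[ℤ] Λ) :
    B.baseChange A x x =
      ∑ i, ∑ j, (b.baseChange A).repr x i * B (b i) (b j) * (b.baseChange A).repr x j := by
  conv_lhs => rw [← Matrix.toBilin_toMatrix (b.baseChange A) (B.baseChange A)]
  rw [Matrix.toBilin_apply]
  simp only [toMatrix_apply, Module.Basis.baseChange_apply, baseChange_one_tmul]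

theorem exists_apply_self_neg_of_baseChange_real [Module.Free ℤ Λ] [Module.Finite ℤ Λ]
    (B : BilinForm ℤ Λ) {y : ℝ ⊗[ℤ] Λ} (hy : B.baseChange ℝ y y < 0) : ∃ x, B x x < 0 := by
  classical
  let b := Module.Free.chooseBasis ℤ Λ
  let f : (Module.Free.ChooseBasisIndex ℤ Λ → ℝ) → ℝ :=
    fun t => ∑ i, ∑ j, t i * B (b i) (b j) * t j
  have hf : Continuous f := by fun_prop
  obtain ⟨q, hq⟩ := (DenseRange.piMap fun _ => Rat.denseRange_cast).exists_mem_open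
    (isOpen_lt hf continuous_const) ⟨_, (B.baseChange_apply_self_eq_sum b y).symm.trans_lt hy⟩
  let x := (b.baseChange ℚ).equivFun.symm q
  have hx : B.baseChange ℚ x x < 0 := by
    rw [B.baseChange_apply_self_eq_sum b]
    simp only [x, Module.Basis.equivFun_symm_apply, Module.Basis.repr_sum_self]
    have hq : ∑ i, ∑ j, (q i : ℝ) * B (b i) (b j) * q j < 0 := hq
    exact_mod_cast hq
  obtain ⟨n, hn, e, he⟩ := exists_zsmul_eq_one_tmul_rat x
  have hBe : (B e e : ℚ) = n * n * B.baseChange ℚ x x := by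
    rw [← baseChange_one_tmul, ← he]
    simp only [LinearMap.map_smul_of_tower, LinearMap.smul_apply, zsmul_eq_mul]
    ring
  have hee : (B e e : ℚ) < 0 :=
    hBe ▸ mul_neg_of_pos_of_neg (mul_self_pos.mpr (by exact_mod_cast hn)) hx
  exact ⟨e, by exact_mod_cast hee⟩

theorem apply_sub_smul_self_eq_zero (B : BilinForm ℤ Λ) (x h : Λ) :
    B (B h h • x - B x h • h) h = 0 := by
  simp only [map_sub, map_zsmul, LinearMap.sub_apply, LinearMap.smul_apply, smul_eq_mul]
  ring

theorem exists_orthogonal_apply_self_neg (B : BilinForm ℤ Λ) (hB : LinearMap.IsSymm B)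
    {h x : Λ} (hh : 0 < B h h) (hx : B x x < 0) : ∃ e, B e h = 0 ∧ B e e < 0 := by
  refine ⟨B h h • x - B x h • h, B.apply_sub_smul_self_eq_zero x h, ?_⟩
  have hsymm : B h x = B x h := hB.eq h x
  simp only [map_sub, map_zsmul, LinearMap.sub_apply, LinearMap.smul_apply, smul_eq_mul, hsymm]
  nlinarith [mul_neg_of_pos_of_neg hh hx, sq_nonneg (B x h)]

theorem exists_orthogonal_one_tmul_notMem_span [Module.Free ℤ Λ] [Module.Finite ℤ Λ]
    (hrank : 2 < Module.finrank ℤ Λ) (B : BilinForm ℤ Λ) {h : Λ} (hh : B h h ≠ 0) (e : Λ) :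
    ∃ f, B f h = 0 ∧ (1 : ℚ) ⊗ₜ[ℤ] f ∉ Submodule.span ℚ {(1 : ℚ) ⊗ₜ[ℤ] e} := by
  classical
  by_contra! hall
  set P := Submodule.span ℚ {(1 : ℚ) ⊗ₜ[ℤ] e, (1 : ℚ) ⊗ₜ[ℤ] h}
  have hP : P < ⊤ := span_lt_top_of_card_lt_finrank <| by
    rw [Module.finrank_baseChange]
    simp only [Set.toFinset_insert, Set.toFinset_singleton]
    exact Finset.card_le_two.trans_lt hrank
  have hmem : ∀ x : Λ, (1 : ℚ) ⊗ₜ[ℤ] x ∈ P := by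
    intro x
    have hf : _ ∈ P := Submodule.span_mono (by simp) (hall _ (B.apply_sub_smul_self_eq_zero x h))
    have hh' : (B h h : ℚ) ≠ 0 := by exact_mod_cast hh
    have hx : (1 : ℚ) ⊗ₜ[ℤ] x = (B h h : ℚ)⁻¹ • ((1 : ℚ) ⊗ₜ[ℤ] (B h h • x - B x h • h) +
        (B x h : ℚ) • (1 : ℚ) ⊗ₜ[ℤ] h) := by
      rw [tmul_sub, tmul_smul, tmul_smul, ← Int.cast_smul_eq_zsmul ℚ, ← Int.cast_smul_eq_zsmul ℚ,
        sub_add_cancel, smul_smul, inv_mul_cancel₀ hh', one_smul]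
    rw [hx]
    exact P.smul_mem _ (P.add_mem hf (P.smul_mem _ (Submodule.subset_span (by simp))))
  refine hP.ne (top_le_iff.mp ?_)
  rw [← (Module.Free.chooseBasis ℤ Λ).baseChange ℚ |>.span_eq, Submodule.span_le]
  rintro _ ⟨i, rfl⟩
  simpa using hmem _

theorem apply_self_lt_of_mem_span_pair [Module.IsTorsionFree ℤ Λ] (B : BilinForm ℤ Λ)
    {h : Λ} (hh : B h h ≠ 0) {φ : ℚ ⊗[ℤ] Λ →ₗ[ℚ] ℚ} {ε : ℚ} (hε : 0 < ε)
    (hφ : ∀ g : Λ, φ (1 ⊗ₜ g) ≠ 0 → ε ≤ |φ (1 ⊗ₜ g)|) {v : ℚ ⊗[ℤ] Λ}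
    (hvh : B.baseChange ℚ v (1 ⊗ₜ h) = 0) (hφv : φ v ≠ 0) {N : ℚ} (hN : 0 ≤ N)
    (hv : B.baseChange ℚ v v < -N * (φ v / ε) ^ 2) (c : ℚ) {g : Λ} (hg : g ≠ 0)
    (hgh : B g h = 0) (hspan : (1 : ℚ) ⊗ₜ[ℤ] g ∈ Submodule.span ℚ {1 ⊗ₜ h, v + c • 1 ⊗ₜ h}) :
    (B g g : ℚ) < -N := by
  obtain ⟨β, hgv⟩ := (B.baseChange ℚ).exists_eq_smul_of_mem_span_pair c
    (by simpa using hh) hvh hspan (by simp [hgh])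
  have hβ : β ≠ 0 := by
    rintro rfl
    rw [zero_smul, one_tmul_rat_eq_zero_iff] at hgv
    exact hg hgv
  have hφg : φ (1 ⊗ₜ g) = β * φ v := by rw [hgv, map_smul, smul_eq_mul]
  have hlarge : 1 ≤ (β * φ v / ε) ^ 2 := by
    rw [div_pow, one_le_div (by positivity), ← hφg]
    exact (pow_le_pow_left₀ hε.le (hφ g (hφg ▸ mul_ne_zero hβ hφv)) 2).trans_eq (sq_abs _)
  calc (B g g : ℚ) = β ^ 2 * B.baseChange ℚ v v := by
        rw [← baseChange_one_tmul, hgv]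
        simp only [map_smul, LinearMap.smul_apply, smul_eq_mul]
        ring
    _ < β ^ 2 * (-N * (φ v / ε) ^ 2) := by gcongr
    _ = -N * (β * φ v / ε) ^ 2 := by ring
    _ ≤ -N := by nlinarith

theorem exists_amendment_of_orthogonal [Module.Free ℤ Λ] [Module.Finite ℤ Λ]
    (B : BilinForm ℤ Λ) (hB : LinearMap.IsSymm B) {h : Λ} (hh : 0 < B h h)
    (Bfield : ℚ ⊗[ℤ] Λ) (N₀ : ℕ) {e f : Λ} (he : B e h = 0) (hee : B e e < 0)
    (hf : B f h = 0) (hfe : (1 : ℚ) ⊗ₜ[ℤ] f ∉ Submodule.span ℚ {(1 : ℚ) ⊗ₜ[ℤ] e}) :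
    ∃ B' : ℚ ⊗[ℤ] Λ,
      (∃ c : Λ, B' - Bfield = (1 : ℚ) ⊗ₜ[ℤ] c) ∧
      (B.baseChange ℚ) B' B' < 0 ∧
      ∀ g : Λ, g ≠ 0 → B g h = 0 →
        ((1 : ℚ) ⊗ₜ[ℤ] g) ∈
          Submodule.span ℚ ({(1 : ℚ) ⊗ₜ[ℤ] h, B'} : Set (ℚ ⊗[ℤ] Λ)) →
        B g g < -(N₀ : ℤ) := by
  set Q := B.baseChange ℚ
  set L := Submodule.span ℚ {(1 : ℚ) ⊗ₜ[ℤ] e}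
  set u : ℚ ⊗[ℤ] Λ := 1 ⊗ₜ h
  have hu : 0 < Q u u := by simpa [Q, u] using hh
  set c := Q Bfield u / Q u u
  obtain ⟨e₁, he₁, hw⟩ : ∃ e₁ : Λ, B e₁ h = 0 ∧ Bfield - c • u + 1 ⊗ₜ e₁ ∉ L := by
    by_cases hw₀ : Bfield - c • u ∈ L
    · exact ⟨f, hf, fun hmem => hfe (by simpa using L.sub_mem hmem hw₀)⟩
    · exact ⟨0, by simp, by simpa using hw₀⟩
  set w := Bfield - c • u + 1 ⊗ₜ e₁
  have hwu : Q w u = 0 := by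
    simp only [w, c, map_add, map_sub, map_smul, LinearMap.add_apply, LinearMap.sub_apply,
      LinearMap.smul_apply, smul_eq_mul, div_mul_cancel₀ _ hu.ne', sub_self, zero_add]
    simpa [Q, u] using he₁
  obtain ⟨φ, hφw, hφL⟩ := Submodule.exists_dual_map_eq_bot_of_notMem hw inferInstance
  have hφe : φ (1 ⊗ₜ e) = 0 := by
    have := Submodule.mem_map_of_mem (f := φ) (Submodule.mem_span_singleton_self ((1 : ℚ) ⊗ₜ[ℤ] e))
    rwa [hφL, Submodule.mem_bot] at this
  obtain ⟨ε, hε, hφ⟩ := exists_pos_le_abs_apply_one_tmul φ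
  have hee' : Q (1 ⊗ₜ e) (1 ⊗ₜ e) < 0 := by simpa [Q] using hee
  obtain ⟨k, hk⟩ := ((Q.tendsto_apply_add_smul_self_atBot w hee').eventually
    (eventually_lt_atBot (min (-N₀ * (φ w / ε) ^ 2) (-c ^ 2 * Q u u)))).exists
  set v := w + (k : ℚ) • (1 : ℚ) ⊗ₜ[ℤ] e
  have hvu : Q v u = 0 := by simp [v, hwu, Q, u, he]
  have hφv : φ v = φ w := by simp [v, hφe]
  have hB' : Bfield + 1 ⊗ₜ (e₁ + k • e) = v + c • u := by
    rw [tmul_add, tmul_smul, ← Nat.cast_smul_eq_nsmul ℚ]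
    simp only [v, w]
    abel
  refine ⟨Bfield + 1 ⊗ₜ (e₁ + k • e), ⟨_, add_sub_cancel_left _ _⟩, ?_, fun g hg hgh hspan => ?_⟩
  · rw [hB', Q.apply_add_smul_self_of_orthogonal (IsSymm.baseChange ℚ hB) hvu]
    linarith [min_le_right (-N₀ * (φ w / ε) ^ 2) (-c ^ 2 * Q u u)]
  · rw [hB'] at hspan
    have := B.apply_self_lt_of_mem_span_pair hh.ne' hε hφ hvu (hφv ▸ hφw) (N := N₀)
      (by positivity) (hφv ▸ hk.trans_le (min_le_left _ _)) c hg hgh hspan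
    exact_mod_cast this

end LinearMap.BilinForm

theorem stmt2_general {Λ : Type*} [AddCommGroup Λ] [Module.Free ℤ Λ] [Module.Finite ℤ Λ]
    (hrank : Module.finrank ℤ Λ = 22)
    (B : LinearMap.BilinForm ℤ Λ) (hsymm : ∀ x y : Λ, B x y = B y x)
    (hsig : nPos (B.baseChange ℝ) = 3 ∧ nNeg (B.baseChange ℝ) = 19 ∧
      nZero (B.baseChange ℝ) = 0)
    (h : Λ) (hh : 0 < B h h)
    (Bfield : ℚ ⊗[ℤ] Λ) (N₀ : ℕ) :
    ∃ B' : ℚ ⊗[ℤ] Λ,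
      (∃ c : Λ, B' - Bfield = (1 : ℚ) ⊗ₜ[ℤ] c) ∧
      (B.baseChange ℚ) B' B' < 0 ∧
      ∀ g : Λ, g ≠ 0 → B g h = 0 →
        ((1 : ℚ) ⊗ₜ[ℤ] g) ∈
          Submodule.span ℚ ({(1 : ℚ) ⊗ₜ[ℤ] h, B'} : Set (ℚ ⊗[ℤ] Λ)) →
        B g g < -(N₀ : ℤ) := by
  have hB : LinearMap.IsSymm B := ⟨hsymm⟩
  obtain ⟨y, hy⟩ := exists_apply_self_neg_of_nNeg_ne_zero (C := B.baseChange ℝ) (by simp [hsig.2.1])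
  obtain ⟨x, hx⟩ := B.exists_apply_self_neg_of_baseChange_real hy
  obtain ⟨e, he, hee⟩ := B.exists_orthogonal_apply_self_neg hB hh hx
  obtain ⟨f, hf, hfe⟩ :=
    B.exists_orthogonal_one_tmul_notMem_span (by rw [hrank]; norm_num) hh.ne' e
  exact B.exists_amendment_of_orthogonal hB hh Bfield N₀ he hee hf hfe

/-- Let `Λ` be a free `ℤ`-module of rank `22` with a symmetric integral
bilinear form whose real extension has signature `(3,19,0)`. Let `h ∈ Λ` with `⟨h,h⟩ > 0`
and `B ∈ Λ ⊗ ℚ`. Then for every positive integer `N₀` there is `B' ∈ Λ ⊗ ℚ` with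
`B' − B` in the image of `Λ`, with `⟨B',B'⟩ < 0`, and such that every nonzero `g ∈ Λ` with
`⟨g,h⟩ = 0` whose image lies in `span_ℚ {h, B'}` satisfies `⟨g,g⟩ < −N₀`. -/
theorem stmt2 {Λ : Type*} [AddCommGroup Λ] [Module.Free ℤ Λ] [Module.Finite ℤ Λ]
    (hrank : Module.finrank ℤ Λ = 22)
    (B : LinearMap.BilinForm ℤ Λ) (hsymm : ∀ x y : Λ, B x y = B y x)
    (hsig : nPos (B.baseChange ℝ) = 3 ∧ nNeg (B.baseChange ℝ) = 19 ∧
      nZero (B.baseChange ℝ) = 0)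
    (h : Λ) (hh : 0 < B h h)
    (Bfield : ℚ ⊗[ℤ] Λ) (N₀ : ℕ) (hN₀ : 0 < N₀) :
    ∃ B' : ℚ ⊗[ℤ] Λ,
      (∃ c : Λ, B' - Bfield = (1 : ℚ) ⊗ₜ[ℤ] c) ∧
      (B.baseChange ℚ) B' B' < 0 ∧
      ∀ g : Λ, g ≠ 0 → B g h = 0 →
        ((1 : ℚ) ⊗ₜ[ℤ] g) ∈
          Submodule.span ℚ ({(1 : ℚ) ⊗ₜ[ℤ] h, B'} : Set (ℚ ⊗[ℤ] Λ)) →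
        B g g < -(N₀ : ℤ) :=
  stmt2_general hrank B hsymm hsig h hh Bfield N₀
end

section
/- Let Λ be an even ℤ-lattice, i.e., a ℤ-module with a symmetric bilinear form ⟨·,·⟩ : Λ × Λ → ℤ such that ⟨x,x⟩ is even for every x ∈ Λ. Let v_p ∈ Λ with ⟨v_p, v_p⟩ = 2 and set v := 2·v_p. Suppose v = a + b with ⟨a,a⟩ ≥ 0, ⟨b,b⟩ ≥ 0 and ⟨a,b⟩ > 2. Then necessarily ⟨a,b⟩ = 4, ⟨a,a⟩ = ⟨b,b⟩ = 0, ⟨v,a⟩ = ⟨v,b⟩ = 4, and the class s := v_p − a is spherical with ⟨s, v⟩ = 0. (This is the numerical content of the lemma that, for a Mukai vector of O'Grady type, no flopping wall arises from a decomposition of v into a sum of two positive classes: any such decomposition with ⟨a,b⟩ > 2 forces a spherical class orthogonal to v.) -/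
/-!
Write `a = v_p - s` and `b = v_p + s` with `s := v_p - a`. Then `⟨a,b⟩ = 2 - ⟨s,s⟩` and
`⟨a,a⟩ + ⟨b,b⟩ = 4 + 2⟨s,s⟩`, so `⟨a,b⟩ > 2` and `⟨a,a⟩, ⟨b,b⟩ ≥ 0` squeeze the even number
`⟨s,s⟩` into `[-2, 0)`, i.e. `⟨s,s⟩ = -2`. Then `⟨a,a⟩ = ⟨b,b⟩ = 0`, which forces `⟨v_p,s⟩ = 0`.
-/

namespace LinearMap.BilinForm

variable {Λ : Type*} [AddCommGroup Λ] {B : LinearMap.BilinForm ℤ Λ}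

theorem apply_add_add_self (hB : ∀ x y, B x y = B y x) (x y : Λ) :
    B (x + y) (x + y) = B x x + 2 * B x y + B y y := by
  simp only [map_add, LinearMap.add_apply, hB y x]
  ring

theorem apply_sub_sub_self (hB : ∀ x y, B x y = B y x) (x y : Λ) :
    B (x - y) (x - y) = B x x - 2 * B x y + B y y := by
  simp only [map_sub, LinearMap.sub_apply, hB y x]
  ring

theorem apply_sub_add_eq (hB : ∀ x y, B x y = B y x) (x y : Λ) :
    B (x - y) (x + y) = B x x - B y y := by
  simp only [map_sub, map_add, LinearMap.sub_apply, hB y x]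
  ring

theorem self_eq_neg_two_and_orthogonal_of_sub_add {vp s : Λ} (hB : ∀ x y, B x y = B y x)
    (hs : Even (B s s)) (hvp : B vp vp = 2) (ha : 0 ≤ B (vp - s) (vp - s))
    (hb : 0 ≤ B (vp + s) (vp + s)) (hab : 2 < B (vp - s) (vp + s)) :
    B s s = -2 ∧ B vp s = 0 := by
  rw [apply_sub_add_eq hB, hvp] at hab
  rw [apply_sub_sub_self hB, hvp] at ha
  rw [apply_add_add_self hB, hvp] at hb
  have hss : B s s = -2 := by
    obtain ⟨k, hk⟩ := hs
    omega
  exact ⟨hss, by omega⟩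

end LinearMap.BilinForm

open LinearMap.BilinForm in
/-- Let `Λ` be an even lattice, `v_p ∈ Λ` with `⟨v_p,v_p⟩ = 2` and
`v := 2 • v_p`. If `v = a + b` with `⟨a,a⟩ ≥ 0`, `⟨b,b⟩ ≥ 0` and `⟨a,b⟩ > 2`, then
`⟨a,b⟩ = 4`, `⟨a,a⟩ = ⟨b,b⟩ = 0`, `⟨v,a⟩ = ⟨v,b⟩ = 4`, and `s := v_p − a` is spherical
with `⟨s,v⟩ = 0`. -/
theorem stmt6 {Λ : Type*} [AddCommGroup Λ]
    (B : LinearMap.BilinForm ℤ Λ) (hsymm : ∀ x y : Λ, B x y = B y x)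
    (heven : ∀ x : Λ, Even (B x x))
    (vp a b : Λ) (hvp : B vp vp = 2) (hsum : 2 • vp = a + b)
    (ha : 0 ≤ B a a) (hb : 0 ≤ B b b) (hab : 2 < B a b) :
    B a b = 4 ∧ B a a = 0 ∧ B b b = 0 ∧
    B (2 • vp) a = 4 ∧ B (2 • vp) b = 4 ∧
    B (vp - a) (vp - a) = -2 ∧ B (vp - a) (2 • vp) = 0 := by
  obtain ⟨s, rfl, rfl⟩ : ∃ s, a = vp - s ∧ b = vp + s :=
    ⟨vp - a, (sub_sub_cancel vp a).symm, by rw [eq_sub_of_add_eq' hsum.symm, two_smul]; abel⟩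
  obtain ⟨hss, hvps⟩ :=
    self_eq_neg_two_and_orthogonal_of_sub_add hsymm (heven s) hvp ha hb hab
  simp only [two_smul, sub_sub_cancel, map_add, map_sub, LinearMap.add_apply,
    LinearMap.sub_apply, hsymm s vp, hvp, hss, hvps]
  norm_num
end

section
/- Fix a positive integer d and equip ℤ³ with the Mukai pairing ⟨(r,c,a),(r',c',a')⟩ = 2d·c·c' − r·a' − r'·a; set v := (2,0,−2). A class s ∈ ℤ³ satisfies ⟨s,s⟩ = −2 and ⟨s,v⟩ = 4 if and only if there exist integers x, y with x² − d·y² = 2 and s = (x+1, −y, x−1). (Flopping walls for v of the second kind are governed by the Pell-type equation x² − d·y² = 2.) -/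
/-- The Mukai pairing on the algebraic Mukai lattice `ℤ³` of a K3 surface with
`Pic(X) = ℤ·H`, `H² = 2d`: `⟨(r,c,a),(r',c',a')⟩ = 2d·c·c' − r·a' − r'·a`. -/
def mukai (d : ℤ) (u w : ℤ × ℤ × ℤ) : ℤ :=
  2 * d * u.2.1 * w.2.1 - u.1 * w.2.2 - w.1 * u.2.2

/-!
Pairing with `v = (2, 0, -2)` gives `⟨(r, c, a), v⟩ = 2(r - a)`, so the condition `⟨s, v⟩ = 4`
says exactly `a = r - 2`. On such classes `⟨s, s⟩ = 2dc² - 2r(r - 2) = -2((r - 1)² - dc² - 2) - 2`,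
so `s` is spherical iff `(x, y) = (r - 1, -c)` solves `x² - dy² = 2`.
-/

theorem mukai_ogrady_eq (d r c a : ℤ) : mukai d (r, c, a) (2, 0, -2) = 2 * (r - a) := by
  simp only [mukai]
  ring

theorem mukai_ogrady_eq_four_iff (d r c a : ℤ) :
    mukai d (r, c, a) (2, 0, -2) = 4 ↔ a = r - 2 := by
  rw [mukai_ogrady_eq]
  omega

theorem mukai_self_eq_neg_two_iff_pell (d r c : ℤ) :
    mukai d (r, c, r - 2) (r, c, r - 2) = -2 ↔ (r - 1) ^ 2 - d * c ^ 2 = 2 := by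
  have h : mukai d (r, c, r - 2) (r, c, r - 2) = -2 * ((r - 1) ^ 2 - d * c ^ 2 - 2) - 2 := by
    simp only [mukai]
    ring
  rw [h]
  omega

theorem stmt10_general (d : ℤ) (s : ℤ × ℤ × ℤ) :
    (mukai d s s = -2 ∧ mukai d s (2, 0, -2) = 4) ↔
      ∃ x y : ℤ, x ^ 2 - d * y ^ 2 = 2 ∧ s = (x + 1, -y, x - 1) := by
  obtain ⟨r, c, a⟩ := s
  rw [mukai_ogrady_eq_four_iff]
  constructor
  · rintro ⟨hs, rfl⟩
    refine ⟨r - 1, -c, ?_, by simp only [Prod.mk.injEq]; omega⟩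
    rw [neg_sq, ← mukai_self_eq_neg_two_iff_pell]
    exact hs
  · rintro ⟨x, y, hxy, hs⟩
    simp only [Prod.mk.injEq] at hs
    obtain ⟨rfl, rfl, rfl⟩ := hs
    have ha : x - 1 = x + 1 - 2 := by ring
    rw [ha, mukai_self_eq_neg_two_iff_pell]
    exact ⟨by simpa only [add_sub_cancel_right, neg_sq] using hxy, rfl⟩

/-- For `v = (2,0,−2)`, a class `s` is spherical with `⟨s,v⟩ = 4`
(a flopping wall of the second kind) if and only if `s = (x+1, −y, x−1)` for a solution
of `x² − d·y² = 2`. -/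
theorem stmt10 (d : ℤ) (hd : 0 < d) (s : ℤ × ℤ × ℤ) :
    (mukai d s s = -2 ∧ mukai d s (2, 0, -2) = 4) ↔
      ∃ x y : ℤ, x ^ 2 - d * y ^ 2 = 2 ∧ s = (x + 1, -y, x - 1) :=
  stmt10_general d s
end

section
/- Equip ℤ³ with the Mukai pairing for d = 1, i.e., ⟨(r,c,a),(r',c',a')⟩ = 2·c·c' − r·a' − r'·a, and set v := (2,0,−2). Then there is no class s ∈ ℤ³ with ⟨s,s⟩ = −2 and ⟨s,v⟩ = 4, and the classes s ∈ ℤ³ with ⟨s,s⟩ = −2 and ⟨s,v⟩ = 2 are exactly (2,1,1), (2,−1,1), (−1,1,−2) and (−1,−1,−2). -/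
theorem Int.sq_emod_four_eq_zero_or_one (x : ℤ) : x ^ 2 % 4 = 0 ∨ x ^ 2 % 4 = 1 := by
  rcases Int.even_or_odd x with ⟨k, rfl⟩ | hx
  · left; ring_nf; omega
  · exact Or.inr (Int.sq_mod_four_eq_one_of_odd hx)

theorem Int.sq_sub_sq_emod_four_ne_two (x y : ℤ) : (x ^ 2 - y ^ 2) % 4 ≠ 2 := by
  rcases x.sq_emod_four_eq_zero_or_one with hx | hx <;>
    rcases y.sq_emod_four_eq_zero_or_one with hy | hy <;> omega

theorem Int.mul_eq_prime_cases {p : ℕ} (hp : p.Prime) {x y : ℤ} (h : x * y = p) :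
    (x = 1 ∧ y = p) ∨ (x = p ∧ y = 1) ∨ (x = -1 ∧ y = -p) ∨ (x = -p ∧ y = -1) := by
  have habs : (x.natAbs * y.natAbs).Prime := by
    rwa [← Int.natAbs_mul, h, Int.natAbs_natCast]
  rcases Nat.prime_mul_iff.mp habs with ⟨-, hy⟩ | ⟨-, hx⟩
  · rcases Int.natAbs_eq_iff.mp hy with rfl | rfl <;> push_cast at h ⊢
    · simp_all
    · exact .inr (.inr (.inr ⟨by linarith, trivial⟩))
  · rcases Int.natAbs_eq_iff.mp hx with rfl | rfl <;> push_cast at h ⊢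
    · simp_all
    · exact .inr (.inr (.inl ⟨trivial, by linarith⟩))

theorem mukai_self (d : ℤ) (s : ℤ × ℤ × ℤ) :
    mukai d s s = 2 * (d * s.2.1 ^ 2 - s.1 * s.2.2) := by
  simp only [mukai]; ring

theorem mukai_mk_zero (d r a : ℤ) (s : ℤ × ℤ × ℤ) :
    mukai d s (r, 0, a) = -(s.1 * a) - r * s.2.2 := by
  simp only [mukai]; ring

theorem mukai_self_eq_neg_two_and_mukai_v_iff (d r c a k : ℤ) :
    (mukai d (r, c, a) (r, c, a) = -2 ∧ mukai d (r, c, a) (2, 0, -2) = 2 * k) ↔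
      r = a + k ∧ a * (a + k) = d * c ^ 2 + 1 := by
  rw [mukai_self, mukai_mk_zero]
  constructor
  · rintro ⟨h1, h2⟩
    obtain rfl : r = a + k := by linarith
    exact ⟨rfl, by linarith⟩
  · rintro ⟨rfl, h⟩
    constructor <;> linarith

theorem not_exists_mukai_self_eq_neg_two_and_mukai_v_eq_four :
    ¬ ∃ s : ℤ × ℤ × ℤ, mukai 1 s s = -2 ∧ mukai 1 s (2, 0, -2) = 4 := by
  rintro ⟨⟨r, c, a⟩, hs⟩
  obtain ⟨-, h⟩ := (mukai_self_eq_neg_two_and_mukai_v_iff 1 r c a 2).mp hs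
  apply Int.sq_sub_sq_emod_four_ne_two (a + 1) c
  rw [show (a + 1) ^ 2 - c ^ 2 = 2 by linarith]
  rfl

theorem mukai_self_eq_neg_two_and_mukai_v_eq_two_iff (s : ℤ × ℤ × ℤ) :
    (mukai 1 s s = -2 ∧ mukai 1 s (2, 0, -2) = 2) ↔
      (s = (2, 1, 1) ∨ s = (2, -1, 1) ∨ s = (-1, 1, -2) ∨ s = (-1, -1, -2)) := by
  obtain ⟨r, c, a⟩ := s
  have hs := mukai_self_eq_neg_two_and_mukai_v_iff 1 r c a 1
  rw [mul_one] at hs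
  rw [hs]
  constructor
  · rintro ⟨rfl, h⟩
    have hfac : (2 * a + 1 - 2 * c) * (2 * a + 1 + 2 * c) = ((5 : ℕ) : ℤ) := by
      push_cast; linarith
    simp only [Prod.mk.injEq]
    rcases Int.mul_eq_prime_cases Nat.prime_five hfac with h | h | h | h <;>
      push_cast at h <;> omega
  · rintro (h | h | h | h) <;> simp only [Prod.mk.injEq] at h <;> obtain ⟨rfl, rfl, rfl⟩ := h <;>
      norm_num

/-- For `d = 1` and `v = (2,0,−2)`: there is no spherical class `s` with
`⟨s,v⟩ = 4`, and the spherical classes `s` with `⟨s,v⟩ = 2` are exactly `(2,1,1)`,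
`(2,−1,1)`, `(−1,1,−2)` and `(−1,−1,−2)`. -/
theorem stmt16 :
    (¬ ∃ s : ℤ × ℤ × ℤ, mukai 1 s s = -2 ∧ mukai 1 s (2, 0, -2) = 4) ∧
    (∀ s : ℤ × ℤ × ℤ, (mukai 1 s s = -2 ∧ mukai 1 s (2, 0, -2) = 2) ↔
      (s = (2, 1, 1) ∨ s = (2, -1, 1) ∨ s = (-1, 1, -2) ∨ s = (-1, -1, -2))) :=
  ⟨not_exists_mukai_self_eq_neg_two_and_mukai_v_eq_four,
    mukai_self_eq_neg_two_and_mukai_v_eq_two_iff⟩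
end
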